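/- arXiv:1008.3765 — 4 statements merged into one kernel-verified Lean document; each statement's English description precedes it below -/
import Mathlib

section
/- In the degenerate case B = 1, the error of best uniform approximation of sgn(x) on J = [-A,-1] ∪ {1} by real polynomials of degree at most n equals L_n = 2/(T_n(1 + 4/(A−1)) + 1), where T_n is the Chebyshev polynomial of the first kind of degree n. -/
open MeasureTheory Filter Set Real

/-- sign function: -1 for negative, 1 otherwise (only used on sets avoiding 0) -/
noncomputable def sgn (x : ℝ) : ℝ := if x < 0 then -1 else 1

/-- The error of best uniform approximation of sgn on [-A,-1] ∪ [1,B]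
by real polynomials of degree at most n. -/
noncomputable def bestErr (A B : ℝ) (n : ℕ) : ℝ :=
  sInf {e : ℝ | ∃ p : Polynomial ℝ, p.degree ≤ (n : ℕ) ∧
    e = sSup ((fun x => |sgn x - p.eval x|) '' (Icc (-A) (-1) ∪ Icc 1 B))}

/-- the weight w(x) = ((1−x²)(x+A)(B−x))^(−1/2) -/
noncomputable def wt (A B x : ℝ) : ℝ := 1 / Real.sqrt ((1 - x ^ 2) * (x + A) * (B - x))

/-- the critical point C of the Green function -/
noncomputable def Ccrit (A B : ℝ) : ℝ :=
  (∫ x in (-1 : ℝ)..1, x * wt A B x) / (∫ x in (-1 : ℝ)..1, wt A B x)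

/-- η = G(C,∞), the critical value of the Green function -/
noncomputable def eta (A B : ℝ) : ℝ :=
  ∫ x in (-1 : ℝ)..(Ccrit A B), (Ccrit A B - x) * wt A B x

/-!
The affine map `x ↦ (2x + A + 1) / (A - 1)` sends `[-A, -1]` onto `[-1, 1]` and `1` to
`σ = 1 + 4 / (A - 1)`. If `p` approximates `sgn` with error `e`, then `|p + 1| ≤ e` on `[-A, -1]`,
so the extremal growth of Chebyshev polynomials outside `[-1, 1]` gives `p(1) + 1 ≤ e T_n(σ)`,
while `1 - p(1) ≤ e`; adding, `e (T_n(σ) + 1) ≥ 2`. Equality is attained by `c T_n(ψ x) - 1` with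
`c = 2 / (T_n(σ) + 1)` and `ψ` the affine map above: its error is `c` on `[-A, -1]` and at `1`.
-/

namespace Polynomial.Chebyshev

theorem eval_le_mul_eval_T_real {n : ℕ} {P : ℝ[X]} {e x : ℝ} (hPdeg : P.degree ≤ n)
    (hPbnd : ∀ y ∈ Icc (-1) 1, |P.eval y| ≤ e) (hx : 1 ≤ x) :
    P.eval x ≤ e * (T ℝ n).eval x := by
  obtain rfl | he := ((abs_nonneg _).trans (hPbnd 0 (by norm_num))).eq_or_lt
  · have hP : P = 0 := P.eq_zero_of_infinite_isRoot <|
      (Icc_infinite (by norm_num : (-1 : ℝ) < 1)).mono fun y hy => abs_nonpos_iff.mp (hPbnd y hy)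
    simp [hP]
  · have h := eval_iterate_derivative_le_of_forall_abs_le_one (k := 0) hx
      ((degree_C_mul (inv_pos.mpr he).ne').trans_le hPdeg) fun y hy => by
        rw [eval_mul, eval_C, abs_mul, abs_of_pos (inv_pos.mpr he), inv_mul_le_iff₀ he, mul_one]
        exact hPbnd y hy
    rwa [Function.iterate_zero_apply, Function.iterate_zero_apply, eval_mul, eval_C,
      inv_mul_le_iff₀ he] at h

theorem eval_le_mul_eval_T_real_of_Icc {a b : ℝ} (hab : a < b) {n : ℕ} {P : ℝ[X]} {e y : ℝ}
    (hPdeg : P.degree ≤ n) (hPbnd : ∀ x ∈ Icc a b, |P.eval x| ≤ e) (hy : b ≤ y) :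
    P.eval y ≤ e * (T ℝ n).eval ((2 * y - a - b) / (b - a)) := by
  have hba : 0 < b - a := sub_pos.mpr hab
  set φ : ℝ[X] := Polynomial.C ((b - a) / 2) * X + Polynomial.C ((a + b) / 2)
  have hφ (t : ℝ) : φ.eval t = (b - a) / 2 * t + (a + b) / 2 := by simp [φ]
  have h := eval_le_mul_eval_T_real (P := P.comp φ) (n := n) (e := e)
    (x := (2 * y - a - b) / (b - a)) ?_ ?_ ?_
  · rwa [eval_comp, hφ, show (b - a) / 2 * ((2 * y - a - b) / (b - a)) + (a + b) / 2 = y by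
      field_simp; ring] at h
  · rw [← natDegree_le_iff_degree_le] at hPdeg ⊢
    calc (P.comp φ).natDegree ≤ P.natDegree * φ.natDegree := natDegree_comp_le
      _ ≤ n * 1 := Nat.mul_le_mul hPdeg natDegree_linear_le
      _ = n := mul_one n
  · intro t ht
    rw [eval_comp, hφ]
    exact hPbnd _ ⟨by nlinarith [ht.1], by nlinarith [ht.2]⟩
  · rw [le_div_iff₀ hba]; linarith

end Polynomial.Chebyshev

open Polynomial

lemma sgn_of_neg {x : ℝ} (hx : x < 0) : sgn x = -1 := if_pos hx

lemma sgn_one : sgn 1 = 1 := if_neg (by norm_num)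

lemma abs_sgn_le_one (x : ℝ) : |sgn x| ≤ 1 := by
  unfold sgn; split_ifs <;> norm_num

noncomputable def approxErr (A B : ℝ) (p : ℝ[X]) : ℝ :=
  sSup ((fun x => |sgn x - p.eval x|) '' (Icc (-A) (-1) ∪ Icc 1 B))

lemma abs_sgn_sub_eval_le_approxErr {A B x : ℝ} (p : ℝ[X])
    (hx : x ∈ Icc (-A) (-1) ∪ Icc 1 B) : |sgn x - p.eval x| ≤ approxErr A B p := by
  obtain ⟨M, hM⟩ := (isCompact_Icc.union isCompact_Icc).exists_bound_of_continuousOn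
    p.continuous.continuousOn
  refine le_csSup ⟨1 + M, ?_⟩ (mem_image_of_mem _ hx)
  rintro _ ⟨y, hy, rfl⟩
  calc |sgn y - p.eval y| ≤ |sgn y| + |p.eval y| := abs_sub _ _
    _ ≤ 1 + M := add_le_add (abs_sgn_le_one y) (hM y hy)

section DegenerateCase

variable {A : ℝ}

noncomputable def degenerateErr (A : ℝ) (n : ℕ) : ℝ :=
  2 / ((Chebyshev.T ℝ n).eval (1 + 4 / (A - 1)) + 1)

lemma degenerateErr_le_approxErr (hA : 1 < A) {n : ℕ} {p : ℝ[X]} (hp : p.degree ≤ n) :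
    degenerateErr A n ≤ approxErr A 1 p := by
  set e := approxErr A 1 p
  have h_one : 1 - p.eval 1 ≤ e := by
    simpa only [sgn_one] using (le_abs_self _).trans
      (abs_sgn_sub_eval_le_approxErr p (Or.inr ⟨le_rfl, le_rfl⟩ : (1 : ℝ) ∈ _ ∪ Icc 1 1))
  have h_growth := Chebyshev.eval_le_mul_eval_T_real_of_Icc (a := -A) (b := -1)
    (neg_lt_neg hA) (P := p + 1) (e := e) (y := 1)
    (degree_add_le_of_degree_le hp (degree_one_le.trans (by exact_mod_cast n.zero_le)))
    (fun x hx => by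
      have h := abs_sgn_sub_eval_le_approxErr (B := 1) p (Or.inl hx)
      rw [eval_add, eval_one]
      rwa [sgn_of_neg (hx.2.trans_lt neg_one_lt_zero), abs_sub_comm, sub_neg_eq_add] at h)
    (by norm_num)
  have hσ : (2 * 1 - -A - -1) / (-1 - -A) = 1 + 4 / (A - 1) := by
    rw [show -1 - -A = A - 1 by ring]
    field_simp [(sub_pos.mpr hA).ne']
    ring
  rw [hσ, eval_add, eval_one] at h_growth
  have hT := Chebyshev.one_le_eval_T_real n (x := 1 + 4 / (A - 1))
    (le_add_of_nonneg_right (div_nonneg zero_le_four (sub_pos.mpr hA).le))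
  rw [degenerateErr, div_le_iff₀ (by linarith)]
  linarith

noncomputable def degenerateExtremal (A : ℝ) (n : ℕ) : ℝ[X] :=
  Polynomial.C (degenerateErr A n) *
    (Chebyshev.T ℝ n).comp (Polynomial.C (2 / (A - 1)) * X + Polynomial.C ((A + 1) / (A - 1))) - 1

lemma degree_degenerateExtremal_le (A : ℝ) (n : ℕ) : (degenerateExtremal A n).degree ≤ n := by
  rw [← natDegree_le_iff_degree_le]
  refine (natDegree_sub_le _ _).trans (max_le ((natDegree_C_mul_le _ _).trans ?_) (by simp))
  calc _ ≤ (Chebyshev.T ℝ n).natDegree * 1 :=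
        natDegree_comp_le.trans (Nat.mul_le_mul_left _ natDegree_linear_le)
    _ = n := by simp [Chebyshev.natDegree_T]

lemma eval_degenerateExtremal (A x : ℝ) (n : ℕ) :
    (degenerateExtremal A n).eval x =
      degenerateErr A n * (Chebyshev.T ℝ n).eval ((2 * x + A + 1) / (A - 1)) - 1 := by
  simp only [degenerateExtremal, eval_sub, eval_mul, eval_C, eval_comp, eval_add, eval_X, eval_one]
  congr 3
  ring

lemma approxErr_degenerateExtremal (hA : 1 < A) (n : ℕ) :
    approxErr A 1 (degenerateExtremal A n) = degenerateErr A n := by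
  have hA1 : 0 < A - 1 := sub_pos.mpr hA
  set c := degenerateErr A n
  set Tσ := (Chebyshev.T ℝ n).eval (1 + 4 / (A - 1))
  have hT : 1 ≤ Tσ := Chebyshev.one_le_eval_T_real n (le_add_of_nonneg_right (by positivity))
  have hc : 0 < c := div_pos two_pos (by linarith)
  have hcT : c * (Tσ + 1) = 2 := div_mul_cancel₀ _ (by linarith)
  have h_at_one : |sgn 1 - (degenerateExtremal A n).eval 1| = c := by
    rw [sgn_one, eval_degenerateExtremal,
      show (2 * 1 + A + 1) / (A - 1) = 1 + 4 / (A - 1) by field_simp; ring]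
    rw [abs_of_nonneg (by linarith)]
    linarith
  refine IsGreatest.csSup_eq ⟨⟨1, Or.inr ⟨le_rfl, le_rfl⟩, h_at_one⟩, ?_⟩
  rintro _ ⟨x, hx | hx, rfl⟩ <;> dsimp only
  · rw [sgn_of_neg (hx.2.trans_lt neg_one_lt_zero), eval_degenerateExtremal,
      show ∀ y, -1 - (c * y - 1) = -(c * y) from fun y => by ring, abs_neg, abs_mul, abs_of_pos hc]
    refine mul_le_of_le_one_right hc.le (Chebyshev.abs_eval_T_real_le_one n (abs_le.mpr ⟨?_, ?_⟩))
    · rw [le_div_iff₀ hA1]; linarith [hx.1]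
    · rw [div_le_iff₀ hA1]; linarith [hx.2]
  · rw [le_antisymm hx.2 hx.1, h_at_one]

end DegenerateCase

theorem degenerate_case_error_general (A : ℝ) (hA : 1 < A) (n : ℕ) :
    bestErr A 1 n = 2 / ((Polynomial.Chebyshev.T ℝ (n : ℤ)).eval (1 + 4 / (A - 1)) + 1) := by
  refine IsLeast.csInf_eq ⟨⟨degenerateExtremal A n, degree_degenerateExtremal_le A n,
    (approxErr_degenerateExtremal hA n).symm⟩, ?_⟩
  rintro _ ⟨p, hp, rfl⟩
  exact degenerateErr_le_approxErr hA hp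

theorem degenerate_case_error (A : ℝ) (hA : 1 < A) (n : ℕ) (hn : 1 ≤ n) :
    bestErr A 1 n = 2 / ((Polynomial.Chebyshev.T ℝ (n : ℤ)).eval (1 + 4 / (A - 1)) + 1) :=
  degenerate_case_error_general A hA n
end

section
/- In the degenerate case B = 1, the polynomial P_n(x) = L_n · T_n((2x + A + 1)/(A−1)) − 1, with L_n = 2/(T_n(1 + 4/(A−1)) + 1), has degree n and attains the best approximation error: sup_{x ∈ J} |sgn(x) − P_n(x)| = L_n, where J = [-A,-1] ∪ {1}. -/
open MeasureTheory Filter Set Real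

namespace DegenAux
open Polynomial Polynomial.Chebyshev

lemma T_deg_lead : ∀ m : ℕ, (T ℝ (m:ℤ)).natDegree = m ∧ (T ℝ (m:ℤ)).leadingCoeff = 2 ^ (m - 1) := by
  have key : ∀ m : ℕ,
      ((T ℝ (m:ℤ)).natDegree = m ∧ (T ℝ (m:ℤ)).leadingCoeff = 2 ^ (m - 1)) ∧
      ((T ℝ ((m+1:ℕ):ℤ)).natDegree = m+1 ∧ (T ℝ ((m+1:ℕ):ℤ)).leadingCoeff = 2 ^ m) := by
    intro m
    induction m with
    | zero =>
      refine ⟨⟨?_, ?_⟩, ⟨?_, ?_⟩⟩ <;> simp [T_zero, T_one]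
    | succ k ih =>
      obtain ⟨hk, hk1⟩ := ih
      refine ⟨⟨hk1.1, by simpa using hk1.2⟩, ?_⟩
      have hrec : T ℝ ((k+2:ℕ):ℤ) = 2 * X * T ℝ ((k+1:ℕ):ℤ) - T ℝ (k:ℤ) := by
        push_cast
        exact T_add_two ℝ k
      have hT1ne : T ℝ ((k+1:ℕ):ℤ) ≠ 0 := by
        intro h
        rw [h] at hk1
        simp at hk1
      have h2Xne : (2 * X : ℝ[X]) ≠ 0 := fun h => by
        simpa using congrArg (Polynomial.eval 1) h
      have hQdeg : (2 * X * T ℝ ((k+1:ℕ):ℤ)).natDegree = k + 2 := by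
        rw [natDegree_mul h2Xne hT1ne, hk1.1]
        have : (2 * X : ℝ[X]).natDegree = 1 := by simp
        omega
      have hQlead : (2 * X * T ℝ ((k+1:ℕ):ℤ)).leadingCoeff = 2 ^ (k+1) := by
        rw [leadingCoeff_mul, hk1.2]
        have : (2 * X : ℝ[X]).leadingCoeff = 2 := by simp [Polynomial.leadingCoeff]
        rw [this]; ring
      have hlt : (T ℝ (k:ℤ)).natDegree < (2 * X * T ℝ ((k+1:ℕ):ℤ)).natDegree := by
        rw [hQdeg, hk.1]; omega
      have hdeg2 : (T ℝ ((k+2:ℕ):ℤ)).natDegree = k+2 := by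
        rw [hrec, natDegree_sub_eq_left_of_natDegree_lt hlt, hQdeg]
      refine ⟨hdeg2, ?_⟩
      have hco : (T ℝ ((k+2:ℕ):ℤ)).coeff (k+2) = 2^(k+1) := by
        rw [hrec, Polynomial.coeff_sub,
          coeff_eq_zero_of_natDegree_lt (show (T ℝ (k:ℤ)).natDegree < k+2 by rw [hk.1]; omega),
          sub_zero, ← hQdeg, Polynomial.coeff_natDegree, hQlead]
      rw [leadingCoeff, hdeg2, hco]
  intro m; exact (key m).1

lemma T_natDegree (m : ℕ) : (T ℝ (m:ℤ)).natDegree = m := (T_deg_lead m).1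

lemma T_pair {t : ℝ} (ht : 1 ≤ t) :
    ∀ m : ℕ, 1 ≤ (T ℝ (m:ℤ)).eval t ∧ (T ℝ (m:ℤ)).eval t ≤ (T ℝ ((m+1:ℕ):ℤ)).eval t := by
  intro m
  induction m with
  | zero => simpa [T_zero, T_one] using ht
  | succ k ih =>
    obtain ⟨h1, h2⟩ := ih
    refine ⟨le_trans h1 h2, ?_⟩
    have hrec : T ℝ ((k+2:ℕ):ℤ) = 2 * X * T ℝ ((k+1:ℕ):ℤ) - T ℝ (k:ℤ) := by
      push_cast; exact T_add_two ℝ k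
    rw [hrec]
    simp only [Polynomial.eval_sub, Polynomial.eval_mul, Polynomial.eval_ofNat, Polynomial.eval_X]
    nlinarith

lemma T_ge_self {t : ℝ} (ht : 1 ≤ t) {m : ℕ} (hm : 1 ≤ m) : t ≤ (T ℝ (m:ℤ)).eval t := by
  induction m with
  | zero => omega
  | succ k ih =>
    rcases Nat.eq_or_lt_of_le hm with h | h
    · simp [← h, T_one]
    · exact le_trans (ih (by omega)) (T_pair ht k).2

lemma abs_T_le_one {x : ℝ} (hx : x ∈ Icc (-1:ℝ) 1) (m : ℕ) : |(T ℝ (m:ℤ)).eval x| ≤ 1 := by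
  rw [← Real.cos_arccos hx.1 hx.2, T_real_cos]
  exact abs_cos_le_one _

end DegenAux

set_option maxHeartbeats 2000000 in
theorem degenerate_case_extremal_polynomial (A : ℝ) (hA : 1 < A) (n : ℕ) (hn : 1 ≤ n)
    (Ln : ℝ) (hLn : Ln = 2 / ((Polynomial.Chebyshev.T ℝ (n : ℤ)).eval (1 + 4 / (A - 1)) + 1))
    (P : Polynomial ℝ)
    (hP : ∀ x : ℝ,
      P.eval x = Ln * (Polynomial.Chebyshev.T ℝ (n : ℤ)).eval ((2 * x + A + 1) / (A - 1)) - 1) :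
    P.natDegree = n ∧
    sSup ((fun x => |sgn x - P.eval x|) '' (Icc (-A) (-1) ∪ Icc 1 1)) = bestErr A 1 n := by
  classical
  have hA1 : (0:ℝ) < A - 1 := by linarith
  set t0 : ℝ := 1 + 4 / (A - 1) with ht0def
  have ht0 : 1 < t0 := by
    have : 0 < 4 / (A - 1) := by positivity
    simp only [ht0def]; linarith
  have hTt0 : 1 < (Polynomial.Chebyshev.T ℝ (n:ℤ)).eval t0 :=
    lt_of_lt_of_le ht0 (DegenAux.T_ge_self ht0.le hn)
  have hDpos : (0:ℝ) < (Polynomial.Chebyshev.T ℝ (n:ℤ)).eval t0 + 1 := by linarith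
  have hLn0 : 0 < Ln := by rw [hLn]; positivity
  have hLnD : Ln * ((Polynomial.Chebyshev.T ℝ (n:ℤ)).eval t0 + 1) = 2 := by
    rw [hLn]; field_simp
  -- sgn values
  have hsgn_neg : ∀ x : ℝ, x ≤ -1 → sgn x = -1 := by
    intro x hx; unfold sgn; rw [if_pos (by linarith)]
  have hsgn1 : sgn 1 = 1 := by unfold sgn; rw [if_neg (by norm_num)]
  -- value at 1
  have hℓ1 : (2 * (1:ℝ) + A + 1) / (A - 1) = t0 := by
    rw [ht0def]; field_simp; ring
  have hP1 : P.eval 1 = 1 - Ln := by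
    rw [hP 1, hℓ1]; linarith [hLnD]
  -- map into [-1,1]
  have hℓmem : ∀ x ∈ Icc (-A) (-1), (2 * x + A + 1) / (A - 1) ∈ Icc (-1:ℝ) 1 := by
    intro x hx
    constructor
    · rw [le_div_iff₀ hA1]; linarith [hx.1]
    · rw [div_le_one hA1]; linarith [hx.2]
  -- sup for P equals Ln
  have hgt : IsGreatest ((fun x => |sgn x - P.eval x|) '' (Icc (-A) (-1) ∪ Icc 1 1)) Ln := by
    constructor
    · refine ⟨1, Or.inr ⟨le_refl 1, le_refl 1⟩, ?_⟩
      show |sgn 1 - P.eval 1| = Ln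
      rw [hsgn1, hP1]
      simp only [sub_sub_cancel]
      exact abs_of_pos hLn0
    · rintro y ⟨x, hx | hx, rfl⟩
      · have hx1 : x ≤ -1 := hx.2
        show |sgn x - P.eval x| ≤ Ln
        rw [hsgn_neg x hx1, hP x]
        have h1 : -1 - (Ln * (Polynomial.Chebyshev.T ℝ (n:ℤ)).eval ((2*x+A+1)/(A-1)) - 1)
            = -(Ln * (Polynomial.Chebyshev.T ℝ (n:ℤ)).eval ((2*x+A+1)/(A-1))) := by ring
        rw [h1, abs_neg, abs_mul, abs_of_pos hLn0]
        calc Ln * |(Polynomial.Chebyshev.T ℝ (n:ℤ)).eval ((2*x+A+1)/(A-1))|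
            ≤ Ln * 1 := by
              exact mul_le_mul_of_nonneg_left (DegenAux.abs_T_le_one (hℓmem x hx) n) hLn0.le
          _ = Ln := mul_one Ln
      · have hx1 : x = 1 := le_antisymm hx.2 hx.1
        subst hx1
        show |sgn 1 - P.eval 1| ≤ Ln
        rw [hsgn1, hP1]
        simp only [sub_sub_cancel]
        exact le_of_eq (abs_of_pos hLn0)
  have hsup : sSup ((fun x => |sgn x - P.eval x|) '' (Icc (-A) (-1) ∪ Icc 1 1)) = Ln :=
    hgt.csSup_eq
  -- degree
  have hLne : Ln ≠ 0 := ne_of_gt hLn0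
  have hcoef_ne : (2:ℝ)/(A-1) ≠ 0 := by positivity
  have hpoly : P = Polynomial.C Ln *
      ((Polynomial.Chebyshev.T ℝ (n:ℤ)).comp
        (Polynomial.C (2/(A-1)) * Polynomial.X + Polynomial.C ((A+1)/(A-1)))) - Polynomial.C 1 := by
    apply Polynomial.funext
    intro x
    rw [hP x]
    simp only [Polynomial.eval_sub, Polynomial.eval_mul, Polynomial.eval_C, Polynomial.eval_comp,
      Polynomial.eval_add, Polynomial.eval_X]
    rw [show (2 * x + A + 1) / (A - 1) = 2/(A-1) * x + (A+1)/(A-1) by field_simp; ring]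
  have hPdeg : P.natDegree = n := by
    rw [hpoly, Polynomial.natDegree_sub_C, Polynomial.natDegree_C_mul hLne,
      Polynomial.natDegree_comp, DegenAux.T_natDegree, Polynomial.natDegree_linear hcoef_ne,
      mul_one]
  refine ⟨hPdeg, ?_⟩
  -- lower bound: every competitor has error ≥ Ln
  have hlow : ∀ e ∈ {e : ℝ | ∃ p : Polynomial ℝ, p.degree ≤ (n : ℕ) ∧
      e = sSup ((fun x => |sgn x - p.eval x|) '' (Icc (-A) (-1) ∪ Icc 1 1))}, Ln ≤ e := by
    rintro e ⟨q, hq, rfl⟩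
    have hbdd : BddAbove ((fun x => |sgn x - q.eval x|) '' (Icc (-A) (-1) ∪ Icc 1 1)) := by
      rw [Set.image_union]
      apply BddAbove.union
      · have himg : ((fun x => |sgn x - q.eval x|) '' Icc (-A) (-1))
            = ((fun x => |(-1) - q.eval x|) '' Icc (-A) (-1)) := by
          apply Set.image_congr
          intro x hx
          rw [hsgn_neg x hx.2]
        rw [himg]
        exact (isCompact_Icc.image ((continuous_const.sub (Polynomial.continuous q)).abs)).bddAbove
      · rw [Set.Icc_self, Set.image_singleton]
        exact bddAbove_singleton
    set s := sSup ((fun x => |sgn x - q.eval x|) '' (Icc (-A) (-1) ∪ Icc 1 1)) with hs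
    by_contra hcon
    push_neg at hcon
    have hle : ∀ x ∈ Icc (-A) (-1) ∪ Icc (1:ℝ) 1, |sgn x - q.eval x| ≤ s :=
      fun x hx => le_csSup hbdd ⟨x, hx, rfl⟩
    have hnpos : 0 < (n:ℝ) := by exact_mod_cast hn
    set c : ℕ → ℝ := fun j => Real.cos (((n - j : ℕ):ℝ) * π / n) with hc
    set Y : ℕ → ℝ := fun j => if j ≤ n then ((A - 1) * c j - A - 1)/2 else 1 with hY
    have hcmem : ∀ j, c j ∈ Icc (-1:ℝ) 1 := fun j => ⟨neg_one_le_cos _, cos_le_one _⟩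
    have hYmem : ∀ j, j ≤ n → Y j ∈ Icc (-A) (-1) := by
      intro j hj
      have h1 := (hcmem j).1
      have h2 := (hcmem j).2
      simp only [hY, if_pos hj]
      constructor
      · rw [le_div_iff₀ (by norm_num : (0:ℝ) < 2)]; nlinarith
      · rw [div_le_iff₀ (by norm_num : (0:ℝ) < 2)]; nlinarith
    have hℓY : ∀ j, j ≤ n → (2 * Y j + A + 1)/(A-1) = c j := by
      intro j hj
      simp only [hY, if_pos hj]
      field_simp
      ring
    have hTc : ∀ j, j ≤ n →
        (Polynomial.Chebyshev.T ℝ (n:ℤ)).eval (c j) = (-1)^(n-j) := by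
      intro j hj
      simp only [hc]
      rw [Polynomial.Chebyshev.T_real_cos]
      have hang : ((n:ℤ):ℝ) * (((n - j : ℕ):ℝ) * π / n) = ((n-j:ℕ):ℝ) * π := by
        push_cast
        field_simp
      rw [hang]
      have := Real.cos_nat_mul_pi_sub 0 (n - j)
      simpa using this
    have hPY : ∀ j, j ≤ n → P.eval (Y j) = Ln * (-1)^(n-j) - 1 := by
      intro j hj
      rw [hP, hℓY j hj, hTc j hj]
    have hYlt : ∀ j k, j < k → k ≤ n + 1 → Y j < Y k := by
      intro j k hjk hk
      rcases Nat.lt_or_ge k (n+1) with hkn | hkn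
      · have hkn' : k ≤ n := by omega
        have hjn : j ≤ n := by omega
        have hsub : (n - k) < (n - j) := by omega
        have hsubR : ((n - k : ℕ):ℝ) < ((n - j : ℕ):ℝ) := by exact_mod_cast hsub
        have hclt : c j < c k := by
          simp only [hc]
          apply Real.cos_lt_cos_of_nonneg_of_le_pi
          · positivity
          · rw [div_le_iff₀ hnpos]
            have : ((n - j : ℕ):ℝ) ≤ (n:ℝ) := by exact_mod_cast Nat.sub_le n j
            nlinarith [Real.pi_pos]
          · have hπ : (0:ℝ) < π / n := by positivity
            calc ((n - k : ℕ):ℝ) * π / n = ((n - k : ℕ):ℝ) * (π / n) := by ring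
              _ < ((n - j : ℕ):ℝ) * (π / n) := by
                  exact mul_lt_mul_of_pos_right hsubR hπ
              _ = ((n - j : ℕ):ℝ) * π / n := by ring
        simp only [hY, if_pos hjn, if_pos hkn']
        rw [div_lt_div_iff_of_pos_right (by norm_num : (0:ℝ) < 2)]
        nlinarith
      · have hk1 : k = n + 1 := by omega
        have hjn : j ≤ n := by omega
        have := (hYmem j hjn).2
        simp only [hY, hk1, if_neg (by omega : ¬ (n+1 ≤ n))]
        linarith
    have hYJ : ∀ j, j ≤ n + 1 → Y j ∈ Icc (-A) (-1) ∪ Icc (1:ℝ) 1 := by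
      intro j hj
      rcases Nat.lt_or_ge j (n+1) with hjn | hjn
      · exact Or.inl (hYmem j (by omega))
      · have : j = n + 1 := by omega
        refine Or.inr ?_
        simp [hY, this, if_neg (by omega : ¬ (n+1 ≤ n))]
    have hsgnr : ∀ j, j ≤ n + 1 → (-1:ℝ)^(n+1-j) * (P.eval (Y j) - q.eval (Y j)) < 0 := by
      intro j hj
      have hqle := hle (Y j) (hYJ j hj)
      rcases Nat.lt_or_ge j (n+1) with hjn | hjn
      · have hjn' : j ≤ n := by omega
        rw [hsgn_neg _ (hYmem j hjn').2] at hqle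
        obtain ⟨ha, hb⟩ := abs_le.mp hqle
        have hpow : (-1:ℝ)^(n+1-j) = -((-1:ℝ)^(n-j)) := by
          rw [show n+1-j = (n-j)+1 by omega, pow_succ]
          ring
        rw [hpow, hPY j hjn']
        rcases Nat.even_or_odd (n-j) with hpar | hpar
        · rw [hpar.neg_one_pow]
          ring_nf
          linarith
        · rw [hpar.neg_one_pow]
          ring_nf
          linarith
      · have hj1 : j = n + 1 := by omega
        subst hj1
        have hY1 : Y (n+1) = 1 := by simp [hY, if_neg (by omega : ¬ (n+1 ≤ n))]
        rw [hY1] at hqle ⊢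
        rw [hsgn1] at hqle
        obtain ⟨ha, hb⟩ := abs_le.mp hqle
        rw [hP1]
        simp only [Nat.sub_self, pow_zero, one_mul]
        linarith
    have hroot : ∀ j : Fin (n+1), ∃ y,
        y ∈ Ioo (Y (j:ℕ)) (Y ((j:ℕ)+1)) ∧ (P - q).eval y = 0 := by
      intro j
      have hjn : (j:ℕ) ≤ n := by omega
      have h1 := hsgnr (j:ℕ) (by omega)
      have h2 := hsgnr ((j:ℕ)+1) (by omega)
      have hYj : Y (j:ℕ) ≤ Y ((j:ℕ)+1) := (hYlt _ _ (by omega) (by omega)).le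
      have hcont : ContinuousOn (fun y => (P - q).eval y) (Icc (Y (j:ℕ)) (Y ((j:ℕ)+1))) :=
        (Polynomial.continuous (P - q)).continuousOn
      have hpow : (-1:ℝ)^(n+1-(j:ℕ)) = -((-1:ℝ)^(n+1-((j:ℕ)+1))) := by
        rw [show n+1-(j:ℕ) = (n+1-((j:ℕ)+1))+1 by omega, pow_succ]
        ring
      rw [hpow] at h1
      set a := (-1:ℝ)^(n+1-((j:ℕ)+1)) with hadef
      have hacases : a = 1 ∨ a = -1 := by
        rcases Nat.even_or_odd (n+1-((j:ℕ)+1)) with hpar | hpar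
        · exact Or.inl hpar.neg_one_pow
        · exact Or.inr hpar.neg_one_pow
      have heval : ∀ z, (P - q).eval z = P.eval z - q.eval z := by
        intro z; simp [Polynomial.eval_sub]
      rcases hacases with ha | ha
      · -- a = 1 : r(Yj) > 0, r(Y(j+1)) < 0
        rw [ha] at h1 h2
        have hr1 : 0 < (P - q).eval (Y (j:ℕ)) := by rw [heval]; nlinarith
        have hr2 : (P - q).eval (Y ((j:ℕ)+1)) < 0 := by rw [heval]; nlinarith
        have := intermediate_value_Ioo' hYj hcont (a := Y (j:ℕ)) (b := Y ((j:ℕ)+1))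
        obtain ⟨y, hy, hy0⟩ := this ⟨hr2, hr1⟩
        exact ⟨y, hy, hy0⟩
      · rw [ha] at h1 h2
        have hr1 : (P - q).eval (Y (j:ℕ)) < 0 := by rw [heval]; nlinarith
        have hr2 : 0 < (P - q).eval (Y ((j:ℕ)+1)) := by rw [heval]; nlinarith
        obtain ⟨y, hy, hy0⟩ := intermediate_value_Ioo hYj hcont ⟨hr1, hr2⟩
        exact ⟨y, hy, hy0⟩
    choose y hy1 hy2 using hroot
    have ymono : StrictMono y := by
      intro i j hij
      have hij' : (i:ℕ) + 1 ≤ (j:ℕ) := hij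
      calc y i < Y ((i:ℕ)+1) := (hy1 i).2
        _ ≤ Y (j:ℕ) := by
            rcases Nat.eq_or_lt_of_le hij' with h | h
            · rw [h]
            · exact (hYlt _ _ h (by omega)).le
        _ < y j := (hy1 j).1
    have hqdeg : q.natDegree ≤ n := Polynomial.natDegree_le_iff_degree_le.mpr hq
    have hrdeg : (P - q).natDegree < Fintype.card (Fin (n+1)) := by
      rw [Fintype.card_fin]
      have := Polynomial.natDegree_sub_le P q
      rw [hPdeg] at this
      omega
    have hr0 : P - q = 0 :=
      Polynomial.eq_zero_of_natDegree_lt_card_of_eval_eq_zero _ ymono.injective hy2 hrdeg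
    have hPq : P = q := sub_eq_zero.mp hr0
    have h1J := hle 1 (Or.inr ⟨le_refl 1, le_refl 1⟩)
    rw [← hPq, hsgn1, hP1] at h1J
    simp only [sub_sub_cancel] at h1J
    rw [abs_of_pos hLn0] at h1J
    linarith
  have hPdegle : P.degree ≤ (n : ℕ) := Polynomial.natDegree_le_iff_degree_le.mp hPdeg.le
  have hmemS : Ln ∈ {e : ℝ | ∃ p : Polynomial ℝ, p.degree ≤ (n : ℕ) ∧
      e = sSup ((fun x => |sgn x - p.eval x|) '' (Icc (-A) (-1) ∪ Icc 1 1))} :=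
    ⟨P, hPdegle, hsup.symm⟩
  rw [hsup]
  unfold bestErr
  exact le_antisymm (le_csInf ⟨Ln, hmemS⟩ hlow) (csInf_le ⟨Ln, hlow⟩ hmemS)
end

section
/- Let τ₀ > 0 and let w be a holomorphic injective map on the upper half-plane ℍ = {z : Im z > 0} such that w(ℍ) ⊆ ℍ, the image w(ℍ) contains the half-plane {z : Im z > τ₀}, and w is normalized at infinity so that w(iy)/(iy) → 1 as y → +∞. Then for every z ∈ ℍ one has 0 ≤ Im w(z) − Im z ≤ τ₀. -/
open Filter Set

open Complex Metric Function Topology ComplexConjugate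

/-! Schwarz–Pick on the upper half-plane, applied to the pair `(I * y, z)`, divided by `y ^ 3`
and let `y → ∞`, gives Julia's lemma at infinity: `Im z ≤ Im w(z)`. For the upper bound,
`ψ ζ = w⁻¹ (ζ + I * τ₀)` is a holomorphic self-map of the half-plane (the inverse of an injective
holomorphic map is holomorphic), and the same limit for `ψ`, taken along `a y = w (I * y) - I * τ₀`
where `ψ (a y) = I * y`, gives `Im w(z) - τ₀ ≤ Im z`. -/

local notation "ℍₒ" => UpperHalfPlane.upperHalfPlaneSet

namespace Complex

/-- The Möbius map of `ℍₒ` onto the unit disc sending `a` to `0`. -/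
noncomputable def cayley (a z : ℂ) : ℂ := (z - a) / (z - conj a)

noncomputable def cayleyInv (a u : ℂ) : ℂ := (a - conj a * u) / (1 - u)

variable {a b : ℂ}

lemma normSq_sub_conj_sub_normSq_sub (a b : ℂ) :
    normSq (b - conj a) - normSq (b - a) = 4 * a.im * b.im := by
  simp only [normSq_apply, sub_re, sub_im, conj_re, conj_im]
  ring

lemma sub_conj_ne_zero (ha : a ∈ ℍₒ) (hb : b ∈ ℍₒ) : b - conj a ≠ 0 := by
  intro h
  have := congrArg im h
  simp only [sub_im, conj_im, zero_im] at this
  linarith [ha.out, hb.out]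

lemma one_sub_sq_norm_cayley (ha : a ∈ ℍₒ) (hb : b ∈ ℍₒ) :
    1 - ‖cayley a b‖ ^ 2 = 4 * a.im * b.im / normSq (b - conj a) := by
  have hN : normSq (b - conj a) ≠ 0 := normSq_eq_zero.not.2 (sub_conj_ne_zero ha hb)
  rw [cayley, Complex.sq_norm, normSq_div, ← normSq_sub_conj_sub_normSq_sub]
  field_simp

lemma norm_cayley_lt_one (ha : a ∈ ℍₒ) (hb : b ∈ ℍₒ) : ‖cayley a b‖ < 1 := by
  have hpos : 0 < 4 * a.im * b.im / normSq (b - conj a) := by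
    have := normSq_pos.2 (sub_conj_ne_zero ha hb)
    have := ha.out
    have := hb.out
    positivity
  nlinarith [one_sub_sq_norm_cayley ha hb, norm_nonneg (cayley a b)]

lemma cayleyInv_mem (ha : a ∈ ℍₒ) {u : ℂ} (hu : ‖u‖ < 1) : cayleyInv a u ∈ ℍₒ := by
  have hu1 : 1 - u ≠ 0 := fun h => by
    rw [← sub_eq_zero.1 h, norm_one] at hu
    exact lt_irrefl _ hu
  have hnum : (a - conj a * u).im * (1 - u).re - (a - conj a * u).re * (1 - u).im
      = a.im * (1 - normSq u) := by
    simp only [sub_re, sub_im, mul_re, mul_im, conj_re, conj_im, normSq_apply, one_re, one_im]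
    ring
  have hu' : normSq u < 1 := by
    rw [← Complex.sq_norm]
    nlinarith [norm_nonneg u]
  show 0 < (cayleyInv a u).im
  rw [cayleyInv, div_im, div_sub_div_same, hnum]
  exact div_pos (mul_pos ha.out (by linarith)) (normSq_pos.2 hu1)

lemma cayleyInv_cayley (ha : a ∈ ℍₒ) (hb : b ∈ ℍₒ) : cayleyInv a (cayley a b) = b := by
  have hb' := sub_conj_ne_zero ha hb
  have ha' := sub_conj_ne_zero ha ha
  have h1 : 1 - cayley a b = (a - conj a) / (b - conj a) := by
    rw [cayley]
    field_simp
    ring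
  rw [cayleyInv, h1, cayley]
  field_simp
  ring

theorem norm_cayley_apply_le {φ : ℂ → ℂ} (hφ : DifferentiableOn ℂ φ ℍₒ)
    (hmaps : MapsTo φ ℍₒ ℍₒ) (ha : a ∈ ℍₒ) (hb : b ∈ ℍₒ) :
    ‖cayley (φ a) (φ b)‖ ≤ ‖cayley a b‖ := by
  set g : ℂ → ℂ := cayley (φ a) ∘ φ ∘ cayleyInv a
  have hinv : MapsTo (cayleyInv a) (ball 0 1) ℍₒ := fun u hu =>
    cayleyInv_mem ha (mem_ball_zero_iff.1 hu)
  have hg : DifferentiableOn ℂ g (ball 0 1) := by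
    refine DifferentiableOn.comp (t := ℍₒ) ?_ (hφ.comp ?_ hinv) (hmaps.comp hinv)
    · exact fun z hz => (differentiableWithinAt_id.sub_const _).div
        (differentiableWithinAt_id.sub_const _) (sub_conj_ne_zero (hmaps ha) hz)
    · exact fun u hu => ((differentiableWithinAt_const _).sub
        ((differentiableWithinAt_const _).mul differentiableWithinAt_id)).div
        ((differentiableWithinAt_const _).sub differentiableWithinAt_id)
        (sub_ne_zero.2 (fun h => by simp [← h] at hu))
  have hg_maps : MapsTo g (ball 0 1) (closedBall 0 1) := fun u hu =>
    mem_closedBall_zero_iff.2 (norm_cayley_lt_one (hmaps ha) (hmaps (hinv hu))).le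
  have hg0 : g 0 = 0 := by simp [g, cayleyInv, cayley]
  simpa [g, cayleyInv_cayley ha hb] using
    norm_le_norm_of_mapsTo_ball hg hg_maps hg0 (norm_cayley_lt_one ha hb)

theorem schwarz_pick_upperHalfPlane {φ : ℂ → ℂ} (hφ : DifferentiableOn ℂ φ ℍₒ)
    (hmaps : MapsTo φ ℍₒ ℍₒ) (ha : a ∈ ℍₒ) (hb : b ∈ ℍₒ) :
    a.im * b.im * normSq (φ b - conj (φ a)) ≤ (φ a).im * (φ b).im * normSq (b - conj a) := by
  have hsq : ‖cayley (φ a) (φ b)‖ ^ 2 ≤ ‖cayley a b‖ ^ 2 := by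
    gcongr
    exact norm_cayley_apply_le hφ hmaps ha hb
  have key : 4 * a.im * b.im / normSq (b - conj a) ≤
      4 * (φ a).im * (φ b).im / normSq (φ b - conj (φ a)) := by
    rw [← one_sub_sq_norm_cayley ha hb, ← one_sub_sq_norm_cayley (hmaps ha) (hmaps hb)]
    linarith
  rw [div_le_div_iff₀ (normSq_pos.2 (sub_conj_ne_zero ha hb))
    (normSq_pos.2 (sub_conj_ne_zero (hmaps ha) (hmaps hb)))] at key
  linarith

end Complex

theorem Set.InjOn.not_eventually_eq {X Y : Type*} [TopologicalSpace X] {f : X → Y} {U : Set X}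
    {x : X} [(𝓝[≠] x).NeBot] (hf : InjOn f U) (hU : U ∈ 𝓝 x) : ¬∀ᶠ y in 𝓝 x, f y = f x := by
  intro h
  obtain ⟨y, ⟨hfy, hyU⟩, hyx⟩ :=
    (((h.and hU).filter_mono nhdsWithin_le_nhds).and (self_mem_nhdsWithin (s := {x}ᶜ))).exists
  exact hyx (hf hyU (mem_of_mem_nhds hU) hfy)

theorem eventually_eq_of_eventually_deriv_eq_zero {𝕜 G : Type*} [RCLike 𝕜]
    [NormedAddCommGroup G] [NormedSpace 𝕜 G] {f : 𝕜 → G} {x : 𝕜}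
    (hf : ∀ᶠ y in 𝓝 x, DifferentiableAt 𝕜 f y) (h : ∀ᶠ y in 𝓝 x, deriv f y = 0) :
    ∀ᶠ y in 𝓝 x, f y = f x := by
  obtain ⟨ε, hε, hball⟩ := Metric.eventually_nhds_iff_ball.1 (hf.and h)
  filter_upwards [ball_mem_nhds x hε] with y hy
  exact isOpen_ball.is_const_of_deriv_eq_zero (convex_ball x ε).isPreconnected
    (fun z hz => (hball z hz).1.differentiableWithinAt) (fun z hz => (hball z hz).2) hy
    (mem_ball_self hε)

section InverseFunction

variable {f : ℂ → ℂ} {U : Set ℂ} {z : ℂ}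

theorem Set.InjOn.nhds_le_map_nhds (hinj : InjOn f U) (hf : DifferentiableOn ℂ f U)
    (hU : IsOpen U) (hz : z ∈ U) : 𝓝 (f z) ≤ map f (𝓝 z) :=
  (hf.analyticAt (hU.mem_nhds hz)).eventually_constant_or_nhds_le_map_nhds.resolve_left
    (hinj.not_eventually_eq (hU.mem_nhds hz))

theorem Set.InjOn.eventually_apply_invFunOn (hinj : InjOn f U) (hf : DifferentiableOn ℂ f U)
    (hU : IsOpen U) (hz : z ∈ U) : ∀ᶠ ζ in 𝓝 (f z), f (invFunOn f U ζ) = ζ :=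
  mem_of_superset (hinj.nhds_le_map_nhds hf hU hz (image_mem_map (hU.mem_nhds hz)))
    fun _ hζ => invFunOn_eq hζ

theorem Set.InjOn.continuousAt_invFunOn (hinj : InjOn f U) (hf : DifferentiableOn ℂ f U)
    (hU : IsOpen U) (hz : z ∈ U) : ContinuousAt (invFunOn f U) (f z) := by
  have hid : Tendsto (invFunOn f U ∘ f) (𝓝 z) (𝓝 z) :=
    tendsto_id.congr' (eventually_of_mem (hU.mem_nhds hz) fun x hx =>
      (hinj.leftInvOn_invFunOn hx).symm)
  rw [ContinuousAt, hinj.leftInvOn_invFunOn hz]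
  exact (tendsto_map'_iff.2 hid).mono_left (hinj.nhds_le_map_nhds hf hU hz)

theorem Set.InjOn.tendsto_invFunOn_nhdsNE (hinj : InjOn f U) (hf : DifferentiableOn ℂ f U)
    (hU : IsOpen U) (hz : z ∈ U) : Tendsto (invFunOn f U) (𝓝[≠] (f z)) (𝓝[≠] z) := by
  refine tendsto_nhdsWithin_iff.2 ⟨?_, ?_⟩
  · have h := (hinj.continuousAt_invFunOn hf hU hz).tendsto
    rw [hinj.leftInvOn_invFunOn hz] at h
    exact h.mono_left nhdsWithin_le_nhds
  · filter_upwards [(hinj.eventually_apply_invFunOn hf hU hz).filter_mono nhdsWithin_le_nhds,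
      self_mem_nhdsWithin] with ζ hζ hne
    exact fun h => hne (hζ.symm.trans (congrArg f (mem_singleton_iff.1 h)))

theorem Set.InjOn.eventually_deriv_ne_zero (hinj : InjOn f U) (hf : DifferentiableOn ℂ f U)
    (hU : IsOpen U) (hz : z ∈ U) : ∀ᶠ x in 𝓝[≠] z, deriv f x ≠ 0 :=
  ((hf.analyticOnNhd hU).deriv z hz).eventually_eq_zero_or_eventually_ne_zero.resolve_left
    fun h => hinj.not_eventually_eq (hU.mem_nhds hz) <| eventually_eq_of_eventually_deriv_eq_zero
      ((hU.eventually_mem hz).mono fun _ hx => hf.differentiableAt (hU.mem_nhds hx)) h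

theorem Set.InjOn.hasDerivAt_invFunOn (hinj : InjOn f U) (hf : DifferentiableOn ℂ f U)
    (hU : IsOpen U) (hz : z ∈ U) (hd : deriv f z ≠ 0) :
    HasDerivAt (invFunOn f U) (deriv f z)⁻¹ (f z) := by
  refine HasDerivAt.of_local_left_inverse (hinj.continuousAt_invFunOn hf hU hz) ?_ hd
    (hinj.eventually_apply_invFunOn hf hU hz)
  rw [hinj.leftInvOn_invFunOn hz]
  exact (hf.differentiableAt (hU.mem_nhds hz)).hasDerivAt

/-- Off the isolated critical points of `f` the inverse function theorem applies; a critical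
value is then a removable singularity of the continuous inverse. -/
theorem Set.InjOn.differentiableAt_invFunOn (hinj : InjOn f U) (hf : DifferentiableOn ℂ f U)
    (hU : IsOpen U) (hz : z ∈ U) : DifferentiableAt ℂ (invFunOn f U) (f z) := by
  refine (Complex.analyticAt_of_differentiable_on_punctured_nhds_of_continuousAt ?_
    (hinj.continuousAt_invFunOn hf hU hz)).differentiableAt
  filter_upwards [(hinj.tendsto_invFunOn_nhdsNE hf hU hz).eventually
      ((hinj.eventually_deriv_ne_zero hf hU hz).and
        ((hU.eventually_mem hz).filter_mono nhdsWithin_le_nhds)),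
    (hinj.eventually_apply_invFunOn hf hU hz).filter_mono nhdsWithin_le_nhds]
    with ζ ⟨hd, hmem⟩ hζ
  rw [← hζ]
  exact (hinj.hasDerivAt_invFunOn hf hU hmem hd).differentiableAt

end InverseFunction

section Julia

variable {φ : ℂ → ℂ}

lemma tendsto_ofReal_inv_atTop : Tendsto (fun y : ℝ => (y : ℂ)⁻¹) atTop (𝓝 0) := by
  simpa [comp_def] using (continuous_ofReal.tendsto 0).comp tendsto_inv_atTop_zero

lemma tendsto_sub_const_div_I_mul {c : ℝ → ℂ}
    (hc : Tendsto (fun y : ℝ => c y / (I * y)) atTop (𝓝 1)) (C : ℂ) :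
    Tendsto (fun y : ℝ => (c y - C) / (I * y)) atTop (𝓝 1) := by
  have h := hc.sub (tendsto_ofReal_inv_atTop.const_mul (C / I))
  rw [mul_zero, sub_zero] at h
  refine h.congr' ?_
  filter_upwards [eventually_ne_atTop 0] with y hy
  have : (y : ℂ) ≠ 0 := by exact_mod_cast hy
  field_simp

lemma tendsto_im_div_of_tendsto_div_I_mul {c : ℝ → ℂ}
    (hc : Tendsto (fun y : ℝ => c y / (I * y)) atTop (𝓝 1)) :
    Tendsto (fun y : ℝ => (c y).im / y) atTop (𝓝 1) := by
  refine ((continuous_re.tendsto 1).comp hc).congr' ?_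
  filter_upwards [eventually_ne_atTop 0] with y hy
  simp only [comp_apply, div_re, mul_re, mul_im, I_re, I_im, ofReal_re, ofReal_im, normSq_apply,
    zero_mul, mul_zero, one_mul, sub_self, zero_add, zero_div]
  field_simp

lemma tendsto_normSq_sub_conj_div_of_tendsto_div_I_mul {c : ℝ → ℂ}
    (hc : Tendsto (fun y : ℝ => c y / (I * y)) atTop (𝓝 1)) (z : ℂ) :
    Tendsto (fun y : ℝ => normSq ((z - conj (c y)) / y)) atTop (𝓝 1) := by
  have h : Tendsto (fun y : ℝ => z * (y : ℂ)⁻¹ + I * conj (c y / (I * y))) atTop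
      (𝓝 (z * 0 + I * conj 1)) :=
    (tendsto_ofReal_inv_atTop.const_mul z).add (((continuous_conj.tendsto 1).comp hc).const_mul I)
  rw [mul_zero, zero_add, map_one, mul_one] at h
  have heq : ∀ᶠ y : ℝ in atTop,
      z * (y : ℂ)⁻¹ + I * conj (c y / (I * y)) = (z - conj (c y)) / y := by
    filter_upwards [eventually_ne_atTop 0] with y hy
    have : (y : ℂ) ≠ 0 := by exact_mod_cast hy
    simp only [map_div₀, map_mul, conj_I, conj_ofReal]
    field_simp
    ring
  simpa [comp_def] using (continuous_normSq.tendsto I).comp (h.congr' heq)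

theorem im_le_im_apply_of_tendsto_div_I_mul (hφ : DifferentiableOn ℂ φ ℍₒ)
    (hmaps : MapsTo φ ℍₒ ℍₒ) {a : ℝ → ℂ} (ha : ∀ᶠ y in atTop, a y ∈ ℍₒ)
    (ha_lim : Tendsto (fun y : ℝ => a y / (I * y)) atTop (𝓝 1))
    (hφa_lim : Tendsto (fun y : ℝ => φ (a y) / (I * y)) atTop (𝓝 1)) {b : ℂ} (hb : b ∈ ℍₒ) :
    b.im ≤ (φ b).im := by
  have hL := ((tendsto_im_div_of_tendsto_div_I_mul ha_lim).mul_const b.im).mul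
    (tendsto_normSq_sub_conj_div_of_tendsto_div_I_mul hφa_lim (φ b))
  have hR := ((tendsto_im_div_of_tendsto_div_I_mul hφa_lim).mul_const (φ b).im).mul
    (tendsto_normSq_sub_conj_div_of_tendsto_div_I_mul ha_lim b)
  suffices h : 1 * b.im * 1 ≤ 1 * (φ b).im * 1 by simpa using h
  refine le_of_tendsto_of_tendsto hL hR ?_
  filter_upwards [ha, eventually_gt_atTop 0] with y hay hy
  have h := div_le_div_of_nonneg_right (schwarz_pick_upperHalfPlane hφ hmaps hay hb)
    (by positivity : (0 : ℝ) ≤ y ^ 3)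
  convert h using 1 <;> (rw [normSq_div, normSq_ofReal]; field_simp)

theorem im_le_im_apply_of_tendsto_apply_I_mul_div (hφ : DifferentiableOn ℂ φ ℍₒ)
    (hmaps : MapsTo φ ℍₒ ℍₒ)
    (hnorm : Tendsto (fun y : ℝ => φ (I * y) / (I * y)) atTop (𝓝 1)) {z : ℂ} (hz : z ∈ ℍₒ) :
    z.im ≤ (φ z).im := by
  refine im_le_im_apply_of_tendsto_div_I_mul hφ hmaps ?_ ?_ hnorm hz
  · filter_upwards [eventually_gt_atTop 0] with y hy
    simpa using hy
  · refine tendsto_const_nhds.congr' ?_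
    filter_upwards [eventually_ne_atTop 0] with y hy
    exact (div_self (mul_ne_zero I_ne_zero (ofReal_ne_zero.2 hy))).symm

end Julia

section ShiftedInverse

variable {τ₀ : ℝ} {w : ℂ → ℂ}

lemma add_I_mul_mem_image (cover : {z : ℂ | τ₀ < z.im} ⊆ w '' ℍₒ) {ζ : ℂ} (hζ : ζ ∈ ℍₒ) :
    ζ + I * τ₀ ∈ w '' ℍₒ :=
  cover (by simpa using hζ)

theorem differentiableOn_invFunOn_add_I_mul (hol : DifferentiableOn ℂ w ℍₒ) (inj : InjOn w ℍₒ)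
    (cover : {z : ℂ | τ₀ < z.im} ⊆ w '' ℍₒ) :
    DifferentiableOn ℂ (fun ζ => invFunOn w ℍₒ (ζ + I * τ₀)) ℍₒ := fun ζ hζ => by
  obtain ⟨x, hx, hwx⟩ := add_I_mul_mem_image cover hζ
  have h := inj.differentiableAt_invFunOn hol UpperHalfPlane.isOpen_upperHalfPlaneSet hx
  rw [hwx] at h
  exact (h.comp ζ (differentiableAt_id.add_const _)).differentiableWithinAt

theorem mapsTo_invFunOn_add_I_mul (cover : {z : ℂ | τ₀ < z.im} ⊆ w '' ℍₒ) :
    MapsTo (fun ζ => invFunOn w ℍₒ (ζ + I * τ₀)) ℍₒ ℍₒ := fun _ hζ =>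
  invFunOn_mem (add_I_mul_mem_image cover hζ)

end ShiftedInverse

theorem conformal_into_halfplane_shift_bound_general (τ₀ : ℝ) (w : ℂ → ℂ)
    (hol : DifferentiableOn ℂ w {z : ℂ | 0 < z.im})
    (inj : Set.InjOn w {z : ℂ | 0 < z.im})
    (maps : Set.MapsTo w {z : ℂ | 0 < z.im} {z : ℂ | 0 < z.im})
    (cover : {z : ℂ | τ₀ < z.im} ⊆ w '' {z : ℂ | 0 < z.im})
    (hnorm : Tendsto (fun y : ℝ => w (Complex.I * y) / (Complex.I * y)) atTop (nhds 1)) :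
    ∀ z : ℂ, 0 < z.im → 0 ≤ (w z).im - z.im ∧ (w z).im - z.im ≤ τ₀ := by
  have lower : ∀ z ∈ ℍₒ, z.im ≤ (w z).im := fun z hz =>
    im_le_im_apply_of_tendsto_apply_I_mul_div hol maps hnorm hz
  have inv_w : ∀ x ∈ ℍₒ, invFunOn w ℍₒ (w x - I * τ₀ + I * τ₀) = x := fun x hx => by
    simpa using inj.leftInvOn_invFunOn hx
  intro z hz
  refine ⟨sub_nonneg.2 (lower z hz), ?_⟩
  rcases le_or_gt (w z).im τ₀ with h | h
  · linarith
  have upper := im_le_im_apply_of_tendsto_div_I_mul (differentiableOn_invFunOn_add_I_mul hol inj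
    cover) (mapsTo_invFunOn_add_I_mul cover) (a := fun y => w (I * y) - I * τ₀) ?_
    (tendsto_sub_const_div_I_mul hnorm _) ?_ (b := w z - I * τ₀) (by simpa using h)
  · simp only [inv_w z hz, sub_im, mul_im, I_re, I_im, ofReal_re, ofReal_im] at upper
    linarith
  · filter_upwards [eventually_gt_atTop τ₀, eventually_gt_atTop 0] with y hyτ hy
    have := lower (I * y) (by simpa using hy)
    simp only [sub_im, mul_im, I_re, I_im, ofReal_re, ofReal_im] at this ⊢
    linarith
  · refine tendsto_const_nhds.congr' ?_
    filter_upwards [eventually_gt_atTop 0] with y hy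
    rw [inv_w _ (by simpa using hy), div_self (mul_ne_zero I_ne_zero (ofReal_ne_zero.2 hy.ne'))]

theorem conformal_into_halfplane_shift_bound (τ₀ : ℝ) (hτ₀ : 0 < τ₀) (w : ℂ → ℂ)
    (hol : DifferentiableOn ℂ w {z : ℂ | 0 < z.im})
    (inj : Set.InjOn w {z : ℂ | 0 < z.im})
    (maps : Set.MapsTo w {z : ℂ | 0 < z.im} {z : ℂ | 0 < z.im})
    (cover : {z : ℂ | τ₀ < z.im} ⊆ w '' {z : ℂ | 0 < z.im})
    (hnorm : Tendsto (fun y : ℝ => w (Complex.I * y) / (Complex.I * y)) atTop (nhds 1)) :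
    ∀ z : ℂ, 0 < z.im → 0 ≤ (w z).im - z.im ∧ (w z).im - z.im ≤ τ₀ :=
  conformal_into_halfplane_shift_bound_general τ₀ w hol inj maps cover hnorm
end

section
/- Let A > 1, B > 1 and let ρ be a nonzero finite Borel measure on ℝ whose support is a compact subset of (B, ∞). Define ρ_∞ = 1 − ∫ dρ(x)/((x−1)(x+1)) and, for real z with z < B, w(z) = ρ_∞(z−1) + 1 + ∫ (z−1)/((x−1)(x−z)) dρ(x). Then A + w(−A) = (A+1)(A−1)·∫ dρ(x)/((x−1)(x+1)(x+A)), which is strictly positive; that is, writing w(−A) = −A₁, one has A₁ < A. -/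
/-!
Partial fractions, `1/(x-z) = 1/(x+1) + (z+1)/((x+1)(x-z))`, make the `ρ_∞` term cancel and give
`w(z) = z + (z²-1) ∫ dρ(x)/((x-1)(x+1)(x-z))` for `z < B`. At `z = -A` the integrand is positive
on `(B, ∞)`, which carries `ρ`. All integrands are bounded there, so finiteness of `ρ` gives
integrability.
-/

open MeasureTheory Set

section

variable {α : Type*} [MeasurableSpace α] {μ : Measure α}

theorem integral_pos_of_ae_pos (hμ : μ ≠ 0) {f : α → ℝ} (hf : ∀ᵐ x ∂μ, 0 < f x)
    (hfi : Integrable f μ) : 0 < ∫ x, f x ∂μ := by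
  rw [integral_pos_iff_support_of_nonneg_ae (hf.mono fun _ hx ↦ hx.le) hfi, pos_iff_ne_zero]
  intro hsupp
  have hfalse : ∀ᵐ x ∂μ, False := by
    filter_upwards [hf, measure_eq_zero_iff_ae_notMem.1 hsupp] with x hpos hzero
    exact hzero (Function.mem_support.2 hpos.ne')
  exact hμ (ae_eq_bot.1 (Filter.eventually_false_iff_eq_bot.1 hfalse))

theorem integrable_one_div_of_ae_le [IsFiniteMeasure μ] {p : α → ℝ} (hp : Measurable p) {c : ℝ}
    (hc : 0 < c) (hpc : ∀ᵐ x ∂μ, c ≤ p x) : Integrable (fun x ↦ 1 / p x) μ := by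
  refine Integrable.of_bound (hp.const_div 1).aestronglyMeasurable (1 / c) ?_
  filter_upwards [hpc] with x hx
  rw [Real.norm_eq_abs, abs_of_pos (by have := hc.trans_le hx; positivity)]
  gcongr

end

theorem sub_one_div_sub_one_mul_sub {x z : ℝ} (hx₁ : x ≠ 1) (hx₂ : x ≠ -1) (hxz : x ≠ z) :
    (z - 1) / ((x - 1) * (x - z)) =
      (z - 1) * (1 / ((x - 1) * (x + 1))) +
        (z + 1) * (z - 1) * (1 / ((x - 1) * (x + 1) * (x - z))) := by
  have h₁ : x - 1 ≠ 0 := sub_ne_zero.2 hx₁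
  have h₂ : x + 1 ≠ 0 := by rwa [← sub_neg_eq_add, sub_ne_zero]
  have h₃ : x - z ≠ 0 := sub_ne_zero.2 hxz
  field_simp
  ring

/-- The function `w` of the statement, with `ρ_∞` written out. -/
noncomputable def nevanlinnaW (ρ : Measure ℝ) (z : ℝ) : ℝ :=
  (1 - ∫ x, 1 / ((x - 1) * (x + 1)) ∂ρ) * (z - 1) + 1 + ∫ x, (z - 1) / ((x - 1) * (x - z)) ∂ρ

section

variable (ρ : Measure ℝ) [IsFiniteMeasure ρ] {B z : ℝ}

theorem integrable_one_div_sub_one_mul_add_one (hB : 1 < B) (hρB : ∀ᵐ x ∂ρ, B < x) :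
    Integrable (fun x ↦ 1 / ((x - 1) * (x + 1))) ρ := by
  refine integrable_one_div_of_ae_le (by fun_prop) (c := (B - 1) * (B + 1)) (by nlinarith) ?_
  filter_upwards [hρB] with x hx
  gcongr
  linarith

theorem integrable_one_div_sub_one_mul_add_one_mul_sub (hB : 1 < B) (hρB : ∀ᵐ x ∂ρ, B < x)
    (hz : z < B) :
    Integrable (fun x ↦ 1 / ((x - 1) * (x + 1) * (x - z))) ρ := by
  have hB₁ : 0 < B - 1 := by linarith
  have hBz : 0 < B - z := by linarith
  refine integrable_one_div_of_ae_le (by fun_prop) (c := (B - 1) * (B + 1) * (B - z))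
    (by positivity) ?_
  filter_upwards [hρB] with x hx
  gcongr <;> nlinarith

theorem integral_one_div_sub_one_mul_add_one_mul_sub_pos (hρ : ρ ≠ 0) (hB : 1 < B)
    (hρB : ∀ᵐ x ∂ρ, B < x) (hz : z < B) :
    0 < ∫ x, 1 / ((x - 1) * (x + 1) * (x - z)) ∂ρ := by
  refine integral_pos_of_ae_pos hρ ?_ (integrable_one_div_sub_one_mul_add_one_mul_sub ρ hB hρB hz)
  filter_upwards [hρB] with x hx
  exact one_div_pos.2 (mul_pos (mul_pos (by linarith) (by linarith)) (by linarith))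

theorem nevanlinnaW_eq (hB : 1 < B) (hρB : ∀ᵐ x ∂ρ, B < x) (hz : z < B) :
    nevanlinnaW ρ z = z + (z + 1) * (z - 1) * ∫ x, 1 / ((x - 1) * (x + 1) * (x - z)) ∂ρ := by
  have hsplit : ∀ᵐ x ∂ρ, (z - 1) / ((x - 1) * (x - z)) = (z - 1) * (1 / ((x - 1) * (x + 1))) +
      (z + 1) * (z - 1) * (1 / ((x - 1) * (x + 1) * (x - z))) := by
    filter_upwards [hρB] with x hx
    exact sub_one_div_sub_one_mul_sub (by linarith) (by linarith) (by linarith)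
  rw [nevanlinnaW, integral_congr_ae hsplit,
    integral_add ((integrable_one_div_sub_one_mul_add_one ρ hB hρB).const_mul _)
      ((integrable_one_div_sub_one_mul_add_one_mul_sub ρ hB hρB hz).const_mul _),
    integral_const_mul, integral_const_mul]
  ring

end

theorem nevanlinna_monotonicity_A_general (A B : ℝ) (hA : 1 < A) (hB : 1 < B)
    (ρ : Measure ℝ) [IsFiniteMeasure ρ] (hρ : ρ ≠ 0)
    (K : Set ℝ) (hKB : K ⊆ Set.Ioi B) (hsupp : ρ Kᶜ = 0)
    (ρInf : ℝ) (hρInf : ρInf = 1 - ∫ x, 1 / ((x - 1) * (x + 1)) ∂ρ)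
    (w : ℝ → ℝ)
    (hw : ∀ z : ℝ, z ≤ B → w z = ρInf * (z - 1) + 1 + ∫ x, (z - 1) / ((x - 1) * (x - z)) ∂ρ) :
    A + w (-A) = (A + 1) * (A - 1) * ∫ x, 1 / ((x - 1) * (x + 1) * (x + A)) ∂ρ ∧
    0 < A + w (-A) := by
  have hρB : ∀ᵐ x ∂ρ, B < x :=
    (measure_eq_zero_iff_ae_notMem.1 hsupp).mono fun _ hx ↦ hKB (notMem_compl_iff.1 hx)
  have hAB : -A < B := by linarith
  have hwA : w (-A) = nevanlinnaW ρ (-A) := by rw [hw _ hAB.le, hρInf, nevanlinnaW]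
  have heq : A + w (-A) =
      (A + 1) * (A - 1) * ∫ x, 1 / ((x - 1) * (x + 1) * (x - -A)) ∂ρ := by
    rw [hwA, nevanlinnaW_eq ρ hB hρB hAB]
    ring
  have hpos := integral_one_div_sub_one_mul_add_one_mul_sub_pos ρ hρ hB hρB hAB
  simp only [sub_neg_eq_add] at heq hpos
  exact ⟨heq, heq ▸ mul_pos (by nlinarith) hpos⟩

theorem nevanlinna_monotonicity_A (A B : ℝ) (hA : 1 < A) (hB : 1 < B)
    (ρ : Measure ℝ) [IsFiniteMeasure ρ] (hρ : ρ ≠ 0)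
    (K : Set ℝ) (hK : IsCompact K) (hKB : K ⊆ Set.Ioi B) (hsupp : ρ Kᶜ = 0)
    (ρInf : ℝ) (hρInf : ρInf = 1 - ∫ x, 1 / ((x - 1) * (x + 1)) ∂ρ)
    (w : ℝ → ℝ)
    (hw : ∀ z : ℝ, z ≤ B → w z = ρInf * (z - 1) + 1 + ∫ x, (z - 1) / ((x - 1) * (x - z)) ∂ρ) :
    A + w (-A) = (A + 1) * (A - 1) * ∫ x, 1 / ((x - 1) * (x + 1) * (x + A)) ∂ρ ∧
    0 < A + w (-A) :=
  nevanlinna_monotonicity_A_general A B hA hB ρ hρ K hKB hsupp ρInf hρInf w hw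
end
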